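/- The extended Clifford algebras Cl(4,0|3,18) := K(4,0) ⊗ Cl(3,18) and Cl(5,0|11,9) := K(5,0) ⊗ Cl(11,9) are isomorphic as R-algebras. -/

import Mathlib

open scoped TensorProduct Quaternion

/-- The diagonal quadratic form of signature `(p, q)` on `ℝ^(p+q)`. -/
noncomputable def signatureForm (p q : ℕ) : QuadraticForm ℝ (Fin (p + q) → ℝ) :=
  QuadraticMap.weightedSumSquares ℝ (fun i : Fin (p + q) => if (i : ℕ) < p then (1 : ℝ) else -1)

/-- The real Clifford algebra `Cl(p,q)`. -/
noncomputable def Cl (p q : ℕ) : Type :=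
  CliffordAlgebra (signatureForm p q)

noncomputable instance (p q : ℕ) : Ring (Cl p q) :=
  inferInstanceAs (Ring (CliffordAlgebra _))

noncomputable instance (p q : ℕ) : Algebra ℝ (Cl p q) :=
  inferInstanceAs (Algebra ℝ (CliffordAlgebra _))

/-- The commutative algebra `K(r,s)` with `r+s` commuting generators,
`r` squaring to `+1` and `s` squaring to `-1`. -/
noncomputable def K (r s : ℕ) : Type :=
  MvPolynomial (Fin (r + s)) ℝ ⧸ Ideal.span
    {f : MvPolynomial (Fin (r + s)) ℝ | ∃ i : Fin (r + s),
      f = MvPolynomial.X i ^ 2 - MvPolynomial.C (if (i : ℕ) < r then (1 : ℝ) else -1)}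

noncomputable instance (r s : ℕ) : CommRing (K r s) :=
  inferInstanceAs (CommRing (_ ⧸ _))

noncomputable instance (r s : ℕ) : Algebra ℝ (K r s) :=
  inferInstanceAs (Algebra ℝ (_ ⧸ _))

/-- The `k`-fold tensor power of an `ℝ`-algebra `A`. -/
noncomputable def tensorPow (A : Type) [Ring A] [Algebra ℝ A] (k : ℕ) : Type :=
  ⨂[ℝ] (_ : Fin k), A

noncomputable instance (A : Type) [Ring A] [Algebra ℝ A] (k : ℕ) : Ring (tensorPow A k) :=
  inferInstanceAs (Ring (⨂[ℝ] (_ : Fin k), A))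

noncomputable instance (A : Type) [Ring A] [Algebra ℝ A] (k : ℕ) : Algebra ℝ (tensorPow A k) :=
  inferInstanceAs (Algebra ℝ (⨂[ℝ] (_ : Fin k), A))


/-!
Two classical moves connect the algebras. If four generators of a diagonal Clifford algebra have
weights with product `1`, their product `β` squares to `1`, anticommutes with these four generators
and commutes with all others; replacing each of the four generators `e` by `β * e` negates their
weights. Two such flips give `Cl(3,18) ≅ Cl(7,14) ≅ Cl(11,10)`. In `Cl(11,9)` (even dimension) the
volume element `ω` anticommutes with every generator and squares to `-1`, so `x ⊗ ω`, where `x` is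
the generator of `K(1,0)`, together with the `1 ⊗ eᵢ` satisfies the relations of `Cl(11,10)`. The
inverse sends `x` to minus the volume element of `Cl(11,10)`, which is central (odd dimension) of
square `1`. Hence `Cl(11,10) ≅ K(1,0) ⊗ Cl(11,9)`, and `K(4,0) ⊗ K(1,0) ≅ K(5,0)` finishes the
proof.
-/

noncomputable section

section CliffordFamily

variable {A B : Type*} [Ring A] [Algebra ℝ A] [Ring B] [Algebra ℝ B] {ι κ : Type*}

structure IsCliffordFamily (s : ι → ℝ) (f : ι → A) : Prop where
  mul_self : ∀ i, f i * f i = algebraMap ℝ A (s i)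
  anticomm : Pairwise fun i j => f i * f j = -(f j * f i)

namespace IsCliffordFamily

variable {s : ι → ℝ} {f : ι → A}

theorem map (hf : IsCliffordFamily s f) (φ : A →ₐ[ℝ] B) : IsCliffordFamily s (φ ∘ f) where
  mul_self i := by rw [Function.comp_apply, ← map_mul, hf.mul_self, AlgHom.commutes]
  anticomm i j hij := by simp only [Function.comp_apply, ← map_mul, ← map_neg, hf.anticomm hij]

theorem comp (hf : IsCliffordFamily s f) {e : κ → ι} (he : Function.Injective e) :
    IsCliffordFamily (s ∘ e) (f ∘ e) where
  mul_self i := hf.mul_self (e i)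
  anticomm _ _ hij := hf.anticomm (he.ne hij)

theorem sum_smul_mul_self (hf : IsCliffordFamily s f) (S : Finset ι) (m : ι → ℝ) :
    (∑ i ∈ S, m i • f i) * (∑ i ∈ S, m i • f i) = algebraMap ℝ A (∑ i ∈ S, s i • (m i * m i)) := by
  classical
  induction S using Finset.induction_on with
  | empty => simp
  | insert a S ha ih =>
    set X := ∑ i ∈ S, m i • f i
    have hcross : f a * X + X * f a = 0 := by
      simp only [X, Finset.mul_sum, Finset.sum_mul, ← Finset.sum_add_distrib, mul_smul_comm,
        smul_mul_assoc, ← smul_add]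
      refine Finset.sum_eq_zero fun i hi => ?_
      rw [hf.anticomm (ne_of_mem_of_not_mem hi ha).symm, neg_add_cancel, smul_zero]
    rw [Finset.sum_insert ha, Finset.sum_insert ha, map_add, ← ih]
    calc (m a • f a + X) * (m a • f a + X)
        = (m a * m a) • (f a * f a) + m a • (f a * X + X * f a) + X * X := by
          simp only [add_mul, mul_add, smul_mul_assoc, mul_smul_comm, smul_smul, smul_add]
          abel
      _ = _ := by
          rw [hcross, smul_zero, add_zero, hf.mul_self, Algebra.smul_def, ← map_mul, smul_eq_mul,
            mul_comm (s a)]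

theorem twist (hf : IsCliffordFamily s f) {β : A} (hβ : β * β = 1) (p : ι → Prop)
    [DecidablePred p] (hanti : ∀ i, p i → f i * β = -(β * f i))
    (hcomm : ∀ i, ¬p i → f i * β = β * f i) :
    IsCliffordFamily (fun i => if p i then -s i else s i)
      (fun i => if p i then β * f i else f i) := by
  have sandwich : ∀ i, p i → ∀ x, β * f i * (β * x) = -(f i * x) := fun i hi x => by
    rw [mul_assoc, ← mul_assoc (f i), hanti i hi, neg_mul, mul_neg, ← mul_assoc, ← mul_assoc, hβ,
      one_mul]
  refine ⟨fun i => ?_, fun i j hij => ?_⟩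
  · by_cases hi : p i
    · simp only [hi, if_true]
      rw [sandwich i hi, hf.mul_self, map_neg]
    · simp only [hi, if_false]
      exact hf.mul_self i
  · have hfij := hf.anticomm hij
    by_cases hi : p i <;> by_cases hj : p j <;> simp only [hi, hj, if_true, if_false]
    · rw [sandwich i hi, sandwich j hj, hfij]
    · rw [mul_assoc, hfij, mul_neg, ← mul_assoc, ← mul_assoc, ← hcomm j hj]
    · rw [← mul_assoc, hcomm i hi, mul_assoc, hfij, mul_neg, mul_assoc]
    · exact hfij

theorem snoc {n : ℕ} {s : Fin n → ℝ} {f : Fin n → A} (hf : IsCliffordFamily s f) {y : A} {c : ℝ}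
    (hy : y * y = algebraMap ℝ A c) (hanti : ∀ i, f i * y = -(y * f i)) :
    IsCliffordFamily (Fin.snoc (α := fun _ => ℝ) s c) (Fin.snoc (α := fun _ => A) f y) where
  mul_self i := by
    induction i using Fin.lastCases <;> simp [hy, hf.mul_self]
  anticomm i j hij := by
    induction i using Fin.lastCases <;> induction j using Fin.lastCases
    · exact absurd rfl hij
    · simp [hanti]
    · simp [hanti]
    · simp [hf.anticomm fun h => hij (congrArg _ h)]

variable [DecidableEq ι]

theorem mul_prod_map (hf : IsCliffordFamily s f) (j : ι) (L : List ι) :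
    f j * (L.map f).prod = (-1 : ℝ) ^ L.countP (· ≠ j) • ((L.map f).prod * f j) := by
  induction L with
  | nil => simp
  | cons a T ih =>
    simp only [List.map_cons, List.prod_cons, List.countP_cons]
    by_cases h : a = j
    · subst h
      simp only [ne_eq, not_true_eq_false, decide_false, Bool.false_eq_true, if_false, add_zero]
      rw [mul_assoc, ih, mul_smul_comm, ← mul_assoc]
    · simp only [ne_eq, h, not_false_eq_true, decide_true, if_true]
      rw [← mul_assoc, hf.anticomm (Ne.symm h), neg_mul, mul_assoc, ih, mul_smul_comm, pow_succ,
        mul_neg_one, neg_smul, mul_assoc]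

theorem mul_prod_map_of_notMem (hf : IsCliffordFamily s f) {j : ι} {L : List ι} (hj : j ∉ L) :
    f j * (L.map f).prod = (-1 : ℝ) ^ L.length • ((L.map f).prod * f j) := by
  rw [hf.mul_prod_map,
    List.countP_eq_length.mpr fun a ha => by simpa using ne_of_mem_of_not_mem ha hj]

theorem mul_prod_map_of_mem (hf : IsCliffordFamily s f) {j : ι} {L : List ι} (hL : L.Nodup)
    (hj : j ∈ L) : f j * (L.map f).prod = (-1 : ℝ) ^ (L.length + 1) • ((L.map f).prod * f j) := by
  have hcount : L.length = L.countP (· ≠ j) + 1 := by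
    rw [List.length_eq_countP_add_countP (· ≠ j), ← List.count_eq_one_of_mem hL hj,
      List.count_eq_countP]
    exact congrArg _ (List.countP_congr fun a _ => by simp)
  rw [hf.mul_prod_map, hcount, pow_succ, pow_succ, mul_assoc, neg_one_mul, neg_neg, mul_one]

theorem prod_map_mul_self (hf : IsCliffordFamily s f) {L : List ι} (hL : L.Nodup) :
    (L.map f).prod * (L.map f).prod =
      algebraMap ℝ A ((-1) ^ L.length.choose 2 * (L.map s).prod) := by
  induction L with
  | nil => simp
  | cons a T ih =>
    obtain ⟨ha, hT⟩ := List.nodup_cons.mp hL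
    have hchoose : (T.length + 1).choose 2 = T.length + T.length.choose 2 := by
      rw [Nat.choose_succ_succ', Nat.choose_one_right]
    simp only [List.map_cons, List.prod_cons, List.length_cons, hchoose]
    calc f a * (T.map f).prod * (f a * (T.map f).prod)
        = f a * (T.map f).prod * f a * (T.map f).prod := (mul_assoc _ _ _).symm
      _ = (-1 : ℝ) ^ T.length • ((T.map f).prod * (f a * f a) * (T.map f).prod) := by
          rw [hf.mul_prod_map_of_notMem ha, smul_mul_assoc, smul_mul_assoc]
          simp only [mul_assoc]
      _ = _ := by
          rw [hf.mul_self, ← Algebra.commutes, mul_assoc, ih hT, ← map_mul, Algebra.smul_def,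
            ← map_mul]
          congr 1
          ring

end IsCliffordFamily

end CliffordFamily

abbrev DiagClifford {ι : Type*} [Fintype ι] (s : ι → ℝ) : Type _ :=
  CliffordAlgebra (QuadraticMap.weightedSumSquares ℝ s)

namespace DiagClifford

variable {ι : Type*} [Fintype ι] [DecidableEq ι] (s : ι → ℝ)
variable {A : Type*} [Ring A] [Algebra ℝ A]

def gen (i : ι) : DiagClifford s := CliffordAlgebra.ι _ (Pi.single i 1)

theorem ι_eq_sum_smul_gen (m : ι → ℝ) :
    CliffordAlgebra.ι (QuadraticMap.weightedSumSquares ℝ s) m = ∑ i, m i • gen s i := by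
  conv_lhs => rw [← Finset.univ_sum_single m]
  rw [map_sum]
  refine Finset.sum_congr rfl fun i _ => ?_
  rw [gen, ← map_smul, ← Pi.single_smul', smul_eq_mul, mul_one]

theorem isCliffordFamily_gen : IsCliffordFamily s (gen s) where
  mul_self i := by
    rw [gen, CliffordAlgebra.ι_sq_scalar]
    simp [QuadraticMap.weightedSumSquares_apply, Pi.single_apply]
  anticomm i j hij := by
    refine eq_neg_of_add_eq_zero_left (CliffordAlgebra.ι_mul_ι_add_swap_of_isOrtho ?_)
    simp only [QuadraticMap.IsOrtho, QuadraticMap.weightedSumSquares_apply,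
      ← Finset.sum_add_distrib]
    refine Finset.sum_congr rfl fun k _ => ?_
    by_cases hki : k = i <;> by_cases hkj : k = j <;> simp_all

variable {s}

def lift {f : ι → A} (hf : IsCliffordFamily s f) : DiagClifford s →ₐ[ℝ] A :=
  CliffordAlgebra.lift _ ⟨Fintype.linearCombination ℝ f, fun m => by
    rw [Fintype.linearCombination_apply, hf.sum_smul_mul_self,
      QuadraticMap.weightedSumSquares_apply]⟩

theorem lift_gen {f : ι → A} (hf : IsCliffordFamily s f) (i : ι) : lift hf (gen s i) = f i := by
  rw [lift, gen, CliffordAlgebra.lift_ι_apply, Fintype.linearCombination_apply_single, one_smul]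

theorem algHom_ext {g₁ g₂ : DiagClifford s →ₐ[ℝ] A} (h : ∀ i, g₁ (gen s i) = g₂ (gen s i)) :
    g₁ = g₂ :=
  CliffordAlgebra.hom_ext <| (Pi.basisFun ℝ ι).ext fun i => by simpa [gen] using h i

theorem mem_center_of_commute_gen {u : DiagClifford s} (h : ∀ i, Commute (gen s i) u) :
    u ∈ Subalgebra.center ℝ (DiagClifford s) := by
  rw [Subalgebra.mem_center_iff]
  intro z
  induction z using CliffordAlgebra.induction with
  | algebraMap r => exact Algebra.commutes r u
  | ι m =>
    rw [ι_eq_sum_smul_gen]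
    exact Commute.sum_left _ _ _ fun i _ => (h i).smul_left (m i)
  | mul a b ha hb => exact Commute.mul_left ha hb
  | add a b ha hb => exact Commute.add_left ha hb

variable (s) in
def blade (L : List ι) : DiagClifford s := (L.map (gen s)).prod

theorem map_blade (φ : DiagClifford s →ₐ[ℝ] A) (L : List ι) :
    φ (blade s L) = (L.map fun i => φ (gen s i)).prod := by
  rw [blade, map_list_prod, List.map_map]
  rfl

end DiagClifford

/-- `Cl p q` is by definition `DiagClifford (signatureWeight (p + q) p)`, and `K r s` is presented
by the relations `X i ^ 2 = signatureWeight (r + s) r i`. -/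
def signatureWeight (N p : ℕ) (i : Fin N) : ℝ := if (i : ℕ) < p then 1 else -1

theorem signatureWeight_of_lt {N p : ℕ} {i : Fin N} (h : (i : ℕ) < p) :
    signatureWeight N p i = 1 :=
  if_pos h

namespace K

variable {r s : ℕ}

def mk (r s : ℕ) : MvPolynomial (Fin (r + s)) ℝ →ₐ[ℝ] K r s := Ideal.Quotient.mkₐ ℝ _

def gen (r s : ℕ) (i : Fin (r + s)) : K r s := mk r s (MvPolynomial.X i)

theorem gen_mul_self (i : Fin (r + s)) :
    gen r s i * gen r s i = algebraMap ℝ (K r s) (signatureWeight (r + s) r i) := by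
  rw [gen, ← map_mul, ← (mk r s).commutes, MvPolynomial.algebraMap_eq, ← sub_eq_zero, ← map_sub,
    ← sq]
  exact Ideal.Quotient.eq_zero_iff_mem.mpr (Ideal.subset_span ⟨i, rfl⟩)

theorem gen_mul_self_of_zero (i : Fin (r + 0)) : gen r 0 i * gen r 0 i = 1 := by
  rw [gen_mul_self, signatureWeight_of_lt (p := r) i.isLt, map_one]

def lift {B : Type*} [CommRing B] [Algebra ℝ B] (u : Fin (r + s) → B)
    (hu : ∀ i, u i * u i = algebraMap ℝ B (signatureWeight (r + s) r i)) : K r s →ₐ[ℝ] B :=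
  Ideal.Quotient.liftₐ _ (MvPolynomial.aeval u) fun _ ha => by
    refine (Ideal.span_le.mpr ?_ ha : _ ∈ RingHom.ker (MvPolynomial.aeval u))
    rintro _ ⟨i, rfl⟩
    simp [sq, hu, signatureWeight]

theorem lift_gen {B : Type*} [CommRing B] [Algebra ℝ B] {u : Fin (r + s) → B}
    (hu : ∀ i, u i * u i = algebraMap ℝ B (signatureWeight (r + s) r i)) (i : Fin (r + s)) :
    lift u hu (gen r s i) = u i :=
  (Ideal.Quotient.lift_mk _ _ _).trans (MvPolynomial.aeval_X u i)

theorem algHom_ext {A : Type*} [Semiring A] [Algebra ℝ A] {g₁ g₂ : K r s →ₐ[ℝ] A}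
    (h : ∀ i, g₁ (gen r s i) = g₂ (gen r s i)) : g₁ = g₂ :=
  Ideal.Quotient.algHom_ext ℝ (MvPolynomial.algHom_ext h)

end K

section Flip

theorem prod_map_mul_left_of_length_eq_four {A ι : Type*} [Ring A] {f : ι → A} {β : A}
    (hβ : β * β = 1) {L : List ι} (hL : L.length = 4) (hanti : ∀ k ∈ L, f k * β = -(β * f k)) :
    (L.map fun k => β * f k).prod = (L.map f).prod := by
  have sandwich : ∀ k ∈ L, ∀ x, β * f k * (β * x) = -(f k * x) := fun k hk x => by
    rw [mul_assoc, ← mul_assoc (f k), hanti k hk, neg_mul, mul_neg, ← mul_assoc, ← mul_assoc, hβ,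
      one_mul]
  match L, hL with
  | [a, b, c, d], _ =>
    simp only [List.map_cons, List.map_nil, List.prod_cons, List.prod_nil, mul_one]
    rw [sandwich c (by simp), ← mul_assoc, sandwich a (by simp), neg_mul_neg, mul_assoc]

variable {ι : Type*} [DecidableEq ι]

structure IsFourFlip (L : List ι) (s t : ι → ℝ) : Prop where
  nodup : L.Nodup
  length_eq : L.length = 4
  prod_map_eq_one : (L.map s).prod = 1
  apply_eq : ∀ i, t i = if i ∈ L then -s i else s i

variable {L : List ι} {s t : ι → ℝ}

theorem IsFourFlip.symm (h : IsFourFlip L s t) : IsFourFlip L t s where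
  nodup := h.nodup
  length_eq := h.length_eq
  prod_map_eq_one := by
    have : L.map t = (L.map s).map Neg.neg := by
      rw [List.map_map]
      exact List.map_congr_left fun i hi => by rw [h.apply_eq, if_pos hi]; rfl
    rw [this, List.prod_map_neg, List.length_map, h.length_eq, h.prod_map_eq_one]
    norm_num
  apply_eq i := by
    rw [h.apply_eq]
    split_ifs <;> simp

namespace DiagClifford

variable [Fintype ι]

theorem blade_mul_self (h : IsFourFlip L s t) : blade s L * blade s L = 1 := by
  rw [blade, (isCliffordFamily_gen s).prod_map_mul_self h.nodup, h.length_eq, h.prod_map_eq_one]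
  norm_num [Nat.choose]

theorem gen_mul_blade_of_mem (h : IsFourFlip L s t) {i : ι} (hi : i ∈ L) :
    gen s i * blade s L = -(blade s L * gen s i) := by
  rw [blade, (isCliffordFamily_gen s).mul_prod_map_of_mem h.nodup hi, h.length_eq]
  norm_num

theorem gen_mul_blade_of_notMem (h : IsFourFlip L s t) {i : ι} (hi : i ∉ L) :
    gen s i * blade s L = blade s L * gen s i := by
  rw [blade, (isCliffordFamily_gen s).mul_prod_map_of_notMem hi, h.length_eq]
  norm_num

theorem isCliffordFamily_flip (h : IsFourFlip L s t) :
    IsCliffordFamily t fun i => if i ∈ L then blade s L * gen s i else gen s i := by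
  rw [show t = _ from funext h.apply_eq]
  exact (isCliffordFamily_gen s).twist (blade_mul_self h) (· ∈ L)
    (fun _ => gen_mul_blade_of_mem h) (fun _ => gen_mul_blade_of_notMem h)

def flipHom (h : IsFourFlip L s t) : DiagClifford t →ₐ[ℝ] DiagClifford s :=
  lift (isCliffordFamily_flip h)

theorem flipHom_gen (h : IsFourFlip L s t) (i : ι) :
    flipHom h (gen t i) = if i ∈ L then blade s L * gen s i else gen s i :=
  lift_gen _ i

theorem flipHom_blade (h : IsFourFlip L s t) : flipHom h (blade t L) = blade s L := by
  rw [map_blade, List.map_congr_left fun i hi => by rw [flipHom_gen, if_pos hi]]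
  exact prod_map_mul_left_of_length_eq_four (blade_mul_self h) h.length_eq
    fun _ => gen_mul_blade_of_mem h

theorem flipHom_comp_flipHom (h : IsFourFlip L s t) :
    (flipHom h.symm).comp (flipHom h) = AlgHom.id ℝ _ := by
  refine algHom_ext fun i => ?_
  rw [AlgHom.comp_apply, flipHom_gen, AlgHom.id_apply]
  split_ifs with hi
  · rw [map_mul, flipHom_blade, flipHom_gen, if_pos hi, ← mul_assoc, blade_mul_self h.symm,
      one_mul]
  · rw [flipHom_gen, if_neg hi]

def flipEquiv (h : IsFourFlip L s t) : DiagClifford s ≃ₐ[ℝ] DiagClifford t :=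
  AlgEquiv.ofAlgHom (flipHom h.symm) (flipHom h) (flipHom_comp_flipHom h)
    (flipHom_comp_flipHom h.symm)

end DiagClifford

end Flip

section VolumeSplit

variable {n : ℕ}

/-- `volume_sq` says that the volume element of `Cl(s)` squares to `-1`. -/
structure IsVolumeExtension (s : Fin n → ℝ) (t : Fin (n + 1) → ℝ) : Prop where
  even : Even n
  volume_sq : (-1) ^ n.choose 2 * ∏ i, s i = -1
  apply_castSucc : ∀ i, t i.castSucc = s i
  apply_last : t (Fin.last n) = -1

namespace DiagClifford

open Algebra.TensorProduct (includeRight)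

variable {s : Fin n → ℝ} {t : Fin (n + 1) → ℝ}

variable (s) in
def volume : DiagClifford s := blade s (List.finRange n)

theorem volume_mul_self (h : IsVolumeExtension s t) : volume s * volume s = -1 := by
  rw [volume, blade, (isCliffordFamily_gen s).prod_map_mul_self (List.nodup_finRange n),
    List.length_finRange, ← Fin.prod_univ_def, h.volume_sq, map_neg, map_one]

theorem gen_mul_volume (h : IsVolumeExtension s t) (i : Fin n) :
    gen s i * volume s = -(volume s * gen s i) := by
  rw [volume, blade, (isCliffordFamily_gen s).mul_prod_map_of_mem (List.nodup_finRange n)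
    (List.mem_finRange i), List.length_finRange, h.even.add_one.neg_one_pow, neg_one_smul]

theorem isCliffordFamily_split (h : IsVolumeExtension s t) :
    IsCliffordFamily t (Fin.snoc (α := fun _ => K 1 0 ⊗[ℝ] DiagClifford s)
      (fun i => 1 ⊗ₜ gen s i) (K.gen 1 0 0 ⊗ₜ volume s)) := by
  have hsnoc := ((isCliffordFamily_gen s).map includeRight).snoc
    (y := K.gen 1 0 0 ⊗ₜ volume s) (c := -1) ?_ fun i => ?_
  · convert hsnoc using 1
    · funext i
      induction i using Fin.lastCases <;> simp [h.apply_castSucc, h.apply_last]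
    · rfl
  · rw [Algebra.TensorProduct.tmul_mul_tmul, K.gen_mul_self_of_zero, volume_mul_self h,
      TensorProduct.tmul_neg, ← Algebra.TensorProduct.one_def, map_neg, map_one]
  · simp [Algebra.TensorProduct.tmul_mul_tmul, gen_mul_volume h, TensorProduct.tmul_neg]

theorem isCliffordFamily_gen_castSucc (h : IsVolumeExtension s t) :
    IsCliffordFamily s fun i => gen t i.castSucc := by
  rw [← funext h.apply_castSucc]
  exact (isCliffordFamily_gen t).comp (Fin.castSucc_injective n)

def splitHom (h : IsVolumeExtension s t) : DiagClifford t →ₐ[ℝ] K 1 0 ⊗[ℝ] DiagClifford s :=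
  lift (isCliffordFamily_split h)

def castSuccHom (h : IsVolumeExtension s t) : DiagClifford s →ₐ[ℝ] DiagClifford t :=
  lift (isCliffordFamily_gen_castSucc h)

theorem castSuccHom_gen (h : IsVolumeExtension s t) (i : Fin n) :
    castSuccHom h (gen s i) = gen t i.castSucc :=
  lift_gen _ i

theorem splitHom_comp_castSuccHom (h : IsVolumeExtension s t) :
    (splitHom h).comp (castSuccHom h) = includeRight := by
  refine algHom_ext fun i => ?_
  rw [AlgHom.comp_apply, castSuccHom_gen, splitHom, lift_gen, Fin.snoc_castSucc,
    Algebra.TensorProduct.includeRight_apply]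

theorem castSuccHom_volume_mul_self (h : IsVolumeExtension s t) :
    castSuccHom h (volume s) * castSuccHom h (volume s) = -1 := by
  rw [← map_mul, volume_mul_self h, map_neg, map_one]

theorem gen_castSucc_mul_castSuccHom_volume (h : IsVolumeExtension s t) (i : Fin n) :
    gen t i.castSucc * castSuccHom h (volume s) =
      -(castSuccHom h (volume s) * gen t i.castSucc) := by
  rw [← castSuccHom_gen h, ← map_mul, gen_mul_volume h, map_neg, map_mul]

theorem commute_gen_last_castSuccHom_volume (h : IsVolumeExtension s t) :
    Commute (gen t (Fin.last n)) (castSuccHom h (volume s)) := by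
  have hlast : Fin.last n ∉ (List.finRange n).map Fin.castSucc := by simp [Fin.castSucc_ne_last]
  have hP :
      castSuccHom h (volume s) = (((List.finRange n).map Fin.castSucc).map (gen t)).prod := by
    rw [volume, map_blade, List.map_map]
    simp only [castSuccHom_gen]
    rfl
  rw [Commute, SemiconjBy, hP, (isCliffordFamily_gen t).mul_prod_map_of_notMem hlast,
    List.length_map, List.length_finRange, h.even.neg_one_pow, one_smul]

/-- Minus the volume element of `Cl(t)`. -/
def splitUnit (h : IsVolumeExtension s t) : DiagClifford t :=
  -(castSuccHom h (volume s) * gen t (Fin.last n))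

theorem splitUnit_mem_center (h : IsVolumeExtension s t) :
    splitUnit h ∈ Subalgebra.center ℝ (DiagClifford t) := by
  refine mem_center_of_commute_gen fun i => Commute.neg_right ?_
  induction i using Fin.lastCases with
  | last => exact (commute_gen_last_castSuccHom_volume h).mul_right (Commute.refl _)
  | cast i =>
    have hanti := (isCliffordFamily_gen t).anticomm (Fin.castSucc_ne_last i)
    change _ * (_ * _) = _ * _ * _
    rw [← mul_assoc, gen_castSucc_mul_castSuccHom_volume h, neg_mul, mul_assoc, hanti, mul_neg,
      neg_neg, mul_assoc]

theorem splitUnit_mul_self (h : IsVolumeExtension s t) : splitUnit h * splitUnit h = 1 := by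
  set P := castSuccHom h (volume s)
  set e := gen t (Fin.last n)
  have hPP : P * P = -1 := castSuccHom_volume_mul_self h
  have hee : e * e = -1 := by
    rw [(isCliffordFamily_gen t).mul_self, h.apply_last, map_neg, map_one]
  have heP : e * P = P * e := (commute_gen_last_castSuccHom_volume h).eq
  rw [splitUnit, neg_mul_neg]
  calc P * e * (P * e) = P * (e * P) * e := by simp only [mul_assoc]
    _ = P * P * (e * e) := by rw [heP]; simp only [mul_assoc]
    _ = 1 := by rw [hPP, hee, neg_mul_neg, one_mul]

theorem splitUnit_mul_castSuccHom_volume (h : IsVolumeExtension s t) :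
    splitUnit h * castSuccHom h (volume s) = gen t (Fin.last n) := by
  rw [splitUnit, neg_mul, mul_assoc, (commute_gen_last_castSuccHom_volume h).eq, ← mul_assoc,
    castSuccHom_volume_mul_self h, neg_one_mul, neg_neg]

def splitUnitHom (h : IsVolumeExtension s t) : K 1 0 →ₐ[ℝ] DiagClifford t :=
  (Subalgebra.center ℝ _).val.comp <|
    K.lift (fun _ => ⟨splitUnit h, splitUnit_mem_center h⟩) fun i => Subtype.ext <| by
      rw [signatureWeight_of_lt (p := 1) i.isLt, map_one]
      exact splitUnit_mul_self h

theorem splitUnitHom_mem_center (h : IsVolumeExtension s t) (x : K 1 0) :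
    splitUnitHom h x ∈ Subalgebra.center ℝ (DiagClifford t) :=
  SetLike.coe_mem _

theorem splitUnitHom_gen (h : IsVolumeExtension s t) (i : Fin (1 + 0)) :
    splitUnitHom h (K.gen 1 0 i) = splitUnit h := by
  rw [splitUnitHom, AlgHom.comp_apply, K.lift_gen, Subalgebra.coe_val]

def splitInv (h : IsVolumeExtension s t) : K 1 0 ⊗[ℝ] DiagClifford s →ₐ[ℝ] DiagClifford t :=
  Algebra.TensorProduct.lift (splitUnitHom h) (castSuccHom h) fun x y =>
    Commute.symm (Subalgebra.mem_center_iff.mp (splitUnitHom_mem_center h x) (castSuccHom h y))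

theorem splitInv_comp_splitHom (h : IsVolumeExtension s t) :
    (splitInv h).comp (splitHom h) = AlgHom.id ℝ _ := by
  refine algHom_ext fun i => ?_
  rw [AlgHom.comp_apply, AlgHom.id_apply, splitHom, lift_gen]
  induction i using Fin.lastCases with
  | last =>
    rw [Fin.snoc_last, splitInv, Algebra.TensorProduct.lift_tmul, splitUnitHom_gen,
      splitUnit_mul_castSuccHom_volume h]
  | cast i =>
    rw [Fin.snoc_castSucc, splitInv, Algebra.TensorProduct.lift_tmul, map_one, one_mul,
      castSuccHom_gen]

theorem splitHom_comp_splitInv (h : IsVolumeExtension s t) :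
    (splitHom h).comp (splitInv h) = AlgHom.id ℝ _ := by
  refine Algebra.TensorProduct.ext (K.algHom_ext fun i => ?_) (algHom_ext fun i => ?_)
  · obtain rfl : i = 0 := Fin.fin_one_eq_zero i
    simp only [AlgHom.comp_apply, Algebra.TensorProduct.includeLeft_apply, AlgHom.id_apply,
      splitInv, Algebra.TensorProduct.lift_tmul, map_one, mul_one, splitUnitHom_gen]
    rw [splitUnit, map_neg, map_mul, ← AlgHom.comp_apply (splitHom h), splitHom_comp_castSuccHom,
      splitHom, lift_gen, Fin.snoc_last, Algebra.TensorProduct.includeRight_apply,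
      Algebra.TensorProduct.tmul_mul_tmul, one_mul, volume_mul_self h, TensorProduct.tmul_neg,
      neg_neg]
  · simp only [AlgHom.comp_apply, AlgHom.restrictScalars_apply,
      Algebra.TensorProduct.includeRight_apply, AlgHom.id_apply, splitInv,
      Algebra.TensorProduct.lift_tmul, map_one, one_mul]
    rw [← AlgHom.comp_apply (splitHom h), splitHom_comp_castSuccHom,
      Algebra.TensorProduct.includeRight_apply]

def splitEquiv (h : IsVolumeExtension s t) : DiagClifford t ≃ₐ[ℝ] K 1 0 ⊗[ℝ] DiagClifford s :=
  AlgEquiv.ofAlgHom (splitHom h) (splitInv h) (splitHom_comp_splitInv h) (splitInv_comp_splitHom h)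

end DiagClifford

end VolumeSplit

namespace K

open Algebra.TensorProduct (productMap)

variable {r r' : ℕ} {B : Type*} [CommRing B] [Algebra ℝ B]

def liftOne (u : Fin (r + 0) → B) (hu : ∀ i, u i * u i = 1) : K r 0 →ₐ[ℝ] B :=
  lift u fun i => by rw [hu, signatureWeight_of_lt (p := r) i.isLt, map_one]

theorem liftOne_gen {u : Fin (r + 0) → B} (hu : ∀ i, u i * u i = 1) (i : Fin (r + 0)) :
    liftOne u hu (gen r 0 i) = u i :=
  lift_gen _ i

variable (r r')

def appendHom : K r 0 ⊗[ℝ] K r' 0 →ₐ[ℝ] K (r + r') 0 :=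
  productMap (liftOne (fun i => gen (r + r') 0 (Fin.castAdd r' i)) fun _ => gen_mul_self_of_zero _)
    (liftOne (fun j => gen (r + r') 0 (Fin.natAdd r j)) fun _ => gen_mul_self_of_zero _)

def appendInv : K (r + r') 0 →ₐ[ℝ] K r 0 ⊗[ℝ] K r' 0 :=
  liftOne (Fin.append (m := r) (n := r') (fun i => gen r 0 i ⊗ₜ 1) (fun j => 1 ⊗ₜ gen r' 0 j))
    fun i => by
      refine Fin.addCases (m := r) (n := r') (fun i => ?_) (fun j => ?_) i <;>
        simp [Algebra.TensorProduct.tmul_mul_tmul, gen_mul_self_of_zero,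
          ← Algebra.TensorProduct.one_def]

def tensorEquiv : K r 0 ⊗[ℝ] K r' 0 ≃ₐ[ℝ] K (r + r') 0 := by
  refine AlgEquiv.ofAlgHom (appendHom r r') (appendInv r r') (algHom_ext fun i => ?_)
    (Algebra.TensorProduct.ext (algHom_ext fun i => ?_) (algHom_ext fun j => ?_))
  · refine Fin.addCases (m := r) (n := r') (fun i => ?_) (fun j => ?_) i <;>
      simp [appendHom, appendInv, liftOne_gen]
  · simp [appendHom, appendInv, liftOne_gen]
  · simp [appendHom, appendInv, liftOne_gen]

end K

theorem prod_signatureWeight (N p : ℕ) : ∏ i, signatureWeight N p i = (-1) ^ (N - p) := by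
  refine (Fin.prod_univ_eq_prod_range (fun k => if k < p then (1 : ℝ) else -1) N).trans ?_
  induction N with
  | zero => simp
  | succ N ih =>
    rw [Finset.prod_range_succ, ih]
    by_cases h : N < p
    · rw [if_pos h, mul_one, Nat.sub_eq_zero_of_le h, Nat.sub_eq_zero_of_le h.le]
    · rw [if_neg h, show N + 1 - p = N - p + 1 by omega, pow_succ, mul_neg_one]

theorem isFourFlip_signatureWeight {N a : ℕ} (h : a + 4 ≤ N) :
    IsFourFlip (List.ofFn fun k : Fin 4 => (⟨a + k, by omega⟩ : Fin N)) (signatureWeight N a)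
      (signatureWeight N (a + 4)) where
  nodup := List.nodup_ofFn.mpr fun k l hkl => Fin.ext (by simpa using congrArg Fin.val hkl)
  length_eq := List.length_ofFn
  prod_map_eq_one := by simp [signatureWeight]
  apply_eq i := by
    have hmem : i ∈ List.ofFn (fun k : Fin 4 => (⟨a + k, by omega⟩ : Fin N)) ↔
        a ≤ i ∧ (i : ℕ) < a + 4 := by
      simp only [List.mem_ofFn, Fin.ext_iff]
      exact ⟨fun ⟨k, hk⟩ => by omega, fun hi => ⟨⟨i - a, by omega⟩, Nat.add_sub_of_le hi.1⟩⟩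
    simp only [signatureWeight, hmem]
    split_ifs <;> first | (exfalso; omega) | norm_num

theorem isVolumeExtension_signatureWeight {N p : ℕ} (hp : p ≤ N) (heven : Even N)
    (hodd : Odd (N.choose 2 + (N - p))) :
    IsVolumeExtension (signatureWeight N p) (signatureWeight (N + 1) p) where
  even := heven
  volume_sq := by rw [prod_signatureWeight, ← pow_add, hodd.neg_one_pow]
  apply_castSucc _ := rfl
  apply_last := if_neg (by simpa using hp)

end

theorem stmt18 : Nonempty ((K 4 0 ⊗[ℝ] Cl 3 18) ≃ₐ[ℝ] (K 5 0 ⊗[ℝ] Cl 11 9)) := by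
  have e : Cl 3 18 ≃ₐ[ℝ] K 1 0 ⊗[ℝ] Cl 11 9 :=
    (DiagClifford.flipEquiv (isFourFlip_signatureWeight (N := 21) (a := 3) (by norm_num))).trans <|
    (DiagClifford.flipEquiv (isFourFlip_signatureWeight (N := 21) (a := 7) (by norm_num))).trans <|
    DiagClifford.splitEquiv
      (isVolumeExtension_signatureWeight (N := 20) (p := 11) (by norm_num) (by decide) (by decide))
  exact ⟨(Algebra.TensorProduct.congr AlgEquiv.refl e).trans <|
    (Algebra.TensorProduct.assoc ℝ ℝ ℝ _ _ _).symm.trans <|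
    Algebra.TensorProduct.congr (K.tensorEquiv 4 1) AlgEquiv.refl⟩
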